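/- If i ≠ j ∈ I satisfy a_{ij} = 0, then the Lusztig symmetries commute: T_i ∘ T_j = T_j ∘ T_i as algebra automorphisms of U. -/
import Mathlib


open scoped TensorProduct

noncomputable section

/-- The base field ℚ(v): rational functions over ℚ. -/
abbrev Kv : Type := RatFunc ℚ

/-- The variable v ∈ ℚ(v). -/
def v : Kv := RatFunc.X

/-- The quantum integer [n]_v = (vⁿ - v⁻ⁿ)/(v - v⁻¹). -/
def qInt (n : ℕ) : Kv := (v ^ n - v⁻¹ ^ n) / (v - v⁻¹)

/-- The quantum factorial [n]_v!. -/
def qFact : ℕ → Kv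
  | 0 => 1
  | n + 1 => qFact n * qInt (n + 1)

/-- The divided power X^{(n)} = Xⁿ/[n]_v!. -/
def dpow {A : Type} [Ring A] [Algebra Kv A] (x : A) (n : ℕ) : A :=
  (qFact n)⁻¹ • x ^ n

/-- The simple coroot h_i, a basis element of P^∨ = I →₀ ℤ. -/
def hgen {I : Type} (i : I) : I →₀ ℤ := Finsupp.single i 1

/-- α_i : P^∨ → ℤ, determined by α_i(h_j) = a_{ij}. -/
def alphaMap {I : Type} (a : I → I → ℤ) (i : I) (μ : I →₀ ℤ) : ℤ :=
  μ.sum fun j c => c * a i j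

/-- Generators of the quantum group: E_i, F_i, K_μ. -/
inductive QGen (I : Type) : Type
  | E : I → QGen I
  | F : I → QGen I
  | K : (I →₀ ℤ) → QGen I

variable {I : Type}

def gE (i : I) : FreeAlgebra Kv (QGen I) := FreeAlgebra.ι Kv (QGen.E i)
def gF (i : I) : FreeAlgebra Kv (QGen I) := FreeAlgebra.ι Kv (QGen.F i)
def gK (μ : I →₀ ℤ) : FreeAlgebra Kv (QGen I) := FreeAlgebra.ι Kv (QGen.K μ)

/-- The defining relations of the quantum group U. -/
inductive URel [DecidableEq I] (a : I → I → ℤ) :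
    FreeAlgebra Kv (QGen I) → FreeAlgebra Kv (QGen I) → Prop
  | K_zero : URel a (gK 0) 1
  | K_add (μ μ' : I →₀ ℤ) : URel a (gK μ * gK μ') (gK (μ + μ'))
  | K_E (μ : I →₀ ℤ) (i : I) :
      URel a (gK μ * gE i * gK (-μ)) ((v ^ alphaMap a i μ) • gE i)
  | K_F (μ : I →₀ ℤ) (i : I) :
      URel a (gK μ * gF i * gK (-μ)) ((v ^ (-alphaMap a i μ)) • gF i)
  | E_F (i j : I) :
      URel a (gE i * gF j - gF j * gE i)
        (if i = j then ((v - v⁻¹)⁻¹ : Kv) • (gK (hgen i) - gK (-hgen i)) else 0)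
  | serreE (i j : I) (h : i ≠ j) :
      URel a (∑ k ∈ Finset.range ((1 - a i j).toNat + 1),
        ((-1 : Kv) ^ k) •
          (dpow (gE i) k * gE j * dpow (gE i) ((1 - a i j).toNat - k))) 0
  | serreF (i j : I) (h : i ≠ j) :
      URel a (∑ k ∈ Finset.range ((1 - a i j).toNat + 1),
        ((-1 : Kv) ^ k) •
          (dpow (gF i) k * gF j * dpow (gF i) ((1 - a i j).toNat - k))) 0

/-- The quantum group U associated with the Cartan matrix `a`. -/
abbrev Uq [DecidableEq I] (a : I → I → ℤ) : Type := RingQuot (URel a)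

def uE [DecidableEq I] (a : I → I → ℤ) (i : I) : Uq a :=
  RingQuot.mkAlgHom Kv (URel a) (gE i)
def uF [DecidableEq I] (a : I → I → ℤ) (i : I) : Uq a :=
  RingQuot.mkAlgHom Kv (URel a) (gF i)
def uK [DecidableEq I] (a : I → I → ℤ) (μ : I →₀ ℤ) : Uq a :=
  RingQuot.mkAlgHom Kv (URel a) (gK μ)

/-- The defining (quantum Serre) relations of Lusztig's algebra f. -/
inductive FRel (a : I → I → ℤ) : FreeAlgebra Kv I → FreeAlgebra Kv I → Prop
  | serre (i j : I) (h : i ≠ j) :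
      FRel a (∑ k ∈ Finset.range ((1 - a i j).toNat + 1),
        ((-1 : Kv) ^ k) •
          (dpow (FreeAlgebra.ι Kv i) k * FreeAlgebra.ι Kv j *
            dpow (FreeAlgebra.ι Kv i) ((1 - a i j).toNat - k))) 0

/-- Lusztig's algebra f associated with the Cartan matrix `a`. -/
abbrev fAlg (a : I → I → ℤ) : Type := RingQuot (FRel a)

/-- The generator θ_i of f. -/
def θq (a : I → I → ℤ) (i : I) : fAlg a :=
  RingQuot.mkAlgHom Kv (FRel a) (FreeAlgebra.ι Kv i)

/-- The subalgebra U⁺ of U generated by the E_i. -/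
def UplusSub [DecidableEq I] (a : I → I → ℤ) : Subalgebra Kv (Uq a) :=
  Algebra.adjoin Kv (Set.range (uE a))

variable {I : Type} [Fintype I] [DecidableEq I]

/-- The defining values of Lusztig's symmetry T_i on the generators of U. -/
def TiCond (a : I → I → ℤ) (i : I) (T : Uq a ≃ₐ[Kv] Uq a) : Prop :=
  T (uE a i) = -(uF a i * uK a (hgen i)) ∧
  T (uF a i) = -(uK a (-hgen i) * uE a i) ∧
  (∀ j, j ≠ i → T (uE a j) =
    ∑ r ∈ Finset.range ((-a i j).toNat + 1),
      ((-1 : Kv) ^ r * v ^ (-(r : ℤ))) •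
        (dpow (uE a i) ((-a i j).toNat - r) * uE a j * dpow (uE a i) r)) ∧
  (∀ j, j ≠ i → T (uF a j) =
    ∑ r ∈ Finset.range ((-a i j).toNat + 1),
      ((-1 : Kv) ^ r * v ^ r) •
        (dpow (uF a i) r * uF a j * dpow (uF a i) ((-a i j).toNat - r))) ∧
  (∀ μ : I →₀ ℤ, T (uK a μ) = uK a (μ - alphaMap a i μ • hgen i))

-- Auxiliary lemmas ---------------------------------------------------------

lemma v_sub_inv_ne : (v : Kv) - v⁻¹ ≠ 0 := by
  intro h
  have hX : (v : Kv) ≠ 0 := by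
    simpa [v] using (RatFunc.X_ne_zero (K := ℚ))
  have hvv : (v : Kv) = v⁻¹ := sub_eq_zero.mp h
  have h2 : (v : Kv) * v = 1 := by
    nth_rewrite 1 [hvv]
    exact inv_mul_cancel₀ hX
  have hmap : algebraMap (Polynomial ℚ) Kv (Polynomial.X * Polynomial.X) =
      algebraMap (Polynomial ℚ) Kv 1 := by
    simpa [map_mul, RatFunc.algebraMap_X, v] using h2
  have hpoly : (Polynomial.X * Polynomial.X : Polynomial ℚ) = 1 :=
    IsFractionRing.injective (Polynomial ℚ) Kv hmap
  have := congrArg Polynomial.natDegree hpoly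
  rw [← pow_two, Polynomial.natDegree_X_pow, Polynomial.natDegree_one] at this
  exact two_ne_zero this

lemma qFact_zero : qFact 0 = 1 := rfl

lemma qFact_one : qFact 1 = 1 := by
  show qFact 0 * qInt 1 = 1
  rw [qFact_zero, one_mul]
  unfold qInt
  rw [pow_one, pow_one]
  exact div_self v_sub_inv_ne

lemma dpow_zero {A : Type} [Ring A] [Algebra Kv A] (x : A) : dpow x 0 = 1 := by
  unfold dpow
  rw [qFact_zero, inv_one, pow_zero, one_smul]

lemma dpow_one {A : Type} [Ring A] [Algebra Kv A] (x : A) : dpow x 1 = x := by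
  unfold dpow
  rw [qFact_one, inv_one, pow_one, one_smul]

lemma dpow_commute {A : Type} [Ring A] [Algebra Kv A] {x y : A} (h : Commute x y)
    (p q : ℕ) : Commute (dpow x p) (dpow y q) := by
  unfold dpow
  show _ * _ = _ * _
  simp only [smul_mul_assoc, mul_smul_comm, smul_smul]
  rw [(h.pow_pow p q).eq, mul_comm]

/-- The "twisted conjugation sum" appearing in Lusztig symmetries. -/
def Ssum {A : Type} [Ring A] [Algebra Kv A] (x : A) (n : ℕ) (c : ℕ → Kv)
    (e f : ℕ → ℕ) (z : A) : A :=
  ∑ r ∈ Finset.range (n + 1), c r • (dpow x (e r) * z * dpow x (f r))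

lemma map_Ssum {A B : Type} [Ring A] [Algebra Kv A] [Ring B] [Algebra Kv B]
    (Φ : A ≃ₐ[Kv] B) (x : A) (n : ℕ) (c : ℕ → Kv) (e f : ℕ → ℕ) (z : A) :
    Φ (Ssum x n c e f z) = Ssum (Φ x) n c e f (Φ z) := by
  unfold Ssum
  rw [map_sum]
  refine Finset.sum_congr rfl fun r _ => ?_
  rw [map_smul, map_mul, map_mul]
  unfold dpow
  rw [map_smul, map_pow, map_smul, map_pow]

lemma Ssum_swap {A : Type} [Ring A] [Algebra Kv A] {x y : A}
    (h : ∀ p q : ℕ, Commute (dpow x p) (dpow y q))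
    (n m : ℕ) (c d : ℕ → Kv) (e f e' f' : ℕ → ℕ) (z : A) :
    Ssum x n c e f (Ssum y m d e' f' z) = Ssum y m d e' f' (Ssum x n c e f z) := by
  unfold Ssum
  simp only [Finset.mul_sum, Finset.sum_mul, Finset.smul_sum, smul_mul_assoc,
    mul_smul_comm, smul_smul]
  rw [Finset.sum_comm]
  refine Finset.sum_congr rfl fun r _ => Finset.sum_congr rfl fun s _ => ?_
  rw [mul_comm (c s) (d r)]
  congr 1
  simp only [mul_assoc]
  rw [(h (f s) (f' r)).eq, ← mul_assoc (dpow x (e s)) (dpow y (e' r)),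
    (h (e s) (e' r)).eq, mul_assoc]

lemma alphaMap_smul_single {I : Type} (a : I → I → ℤ) (i j : I) (c : ℤ) :
    alphaMap a i (c • hgen j) = c * a i j := by
  unfold alphaMap hgen
  rw [Finsupp.smul_single, smul_eq_mul, mul_one]
  exact Finsupp.sum_single_index (zero_mul _)

lemma alphaMap_sub {I : Type} (a : I → I → ℤ) (i : I) (μ ν : I →₀ ℤ) :
    alphaMap a i (μ - ν) = alphaMap a i μ - alphaMap a i ν :=
  Finsupp.sum_sub_index (fun j b₁ b₂ => sub_mul b₁ b₂ (a i j))

section comm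
variable {I : Type} [DecidableEq I]

lemma uE_comm (a : I → I → ℤ) {i j : I} (hij : i ≠ j) (hz : a i j = 0) :
    Commute (uE a i) (uE a j) := by
  have h := RingQuot.mkAlgHom_rel Kv (URel.serreE (a := a) i j hij)
  rw [hz] at h
  simp only [sub_zero, Int.toNat_one] at h
  rw [Finset.sum_range_succ, Finset.sum_range_one] at h
  simp only [dpow_zero, dpow_one, Nat.sub_zero, Nat.sub_self, pow_zero, pow_one,
    one_smul, neg_smul, one_mul, mul_one, map_zero] at h
  have h' : uE a j * uE a i - uE a i * uE a j = 0 := by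
    simpa [sub_eq_add_neg, map_add, map_neg, map_mul, uE, gE] using h
  exact (sub_eq_zero.mp h').symm

lemma uF_comm (a : I → I → ℤ) {i j : I} (hij : i ≠ j) (hz : a i j = 0) :
    Commute (uF a i) (uF a j) := by
  have h := RingQuot.mkAlgHom_rel Kv (URel.serreF (a := a) i j hij)
  rw [hz] at h
  simp only [sub_zero, Int.toNat_one] at h
  rw [Finset.sum_range_succ, Finset.sum_range_one] at h
  simp only [dpow_zero, dpow_one, Nat.sub_zero, Nat.sub_self, pow_zero, pow_one,
    one_smul, neg_smul, one_mul, mul_one, map_zero] at h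
  have h' : uF a j * uF a i - uF a i * uF a j = 0 := by
    simpa [sub_eq_add_neg, map_add, map_neg, map_mul, uF, gF] using h
  exact (sub_eq_zero.mp h').symm

end comm

section fix
variable {I : Type} [Fintype I] [DecidableEq I]

lemma TiCond_fix_E {a : I → I → ℤ} {i : I} {T : Uq a ≃ₐ[Kv] Uq a}
    (hT : TiCond a i T) {j : I} (hji : j ≠ i) (hz : a i j = 0) :
    T (uE a j) = uE a j := by
  have h := hT.2.2.1 j hji
  rw [hz] at h
  simpa [dpow_zero] using h

lemma TiCond_fix_F {a : I → I → ℤ} {i : I} {T : Uq a ≃ₐ[Kv] Uq a}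
    (hT : TiCond a i T) {j : I} (hji : j ≠ i) (hz : a i j = 0) :
    T (uF a j) = uF a j := by
  have h := hT.2.2.2.1 j hji
  rw [hz] at h
  simpa [dpow_zero] using h

lemma TiCond_fix_K {a : I → I → ℤ} {i : I} {T : Uq a ≃ₐ[Kv] Uq a}
    (hT : TiCond a i T) {j : I} (hz : a i j = 0) :
    T (uK a (hgen j)) = uK a (hgen j) := by
  have h := hT.2.2.2.2 (hgen j)
  have ha : alphaMap a i (hgen j) = 0 := by
    have := alphaMap_smul_single a i j 1
    rw [one_smul, one_mul] at this
    rw [this, hz]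
  rw [h, ha, zero_smul, sub_zero]

lemma TiCond_fix_negK {a : I → I → ℤ} {i : I} {T : Uq a ≃ₐ[Kv] Uq a}
    (hT : TiCond a i T) {j : I} (hz : a i j = 0) :
    T (uK a (-hgen j)) = uK a (-hgen j) := by
  have h := hT.2.2.2.2 (-hgen j)
  have ha : alphaMap a i (-hgen j) = 0 := by
    have := alphaMap_smul_single a i j (-1)
    rw [neg_smul, one_smul] at this
    rw [this, hz, mul_zero]
  rw [h, ha, zero_smul, sub_zero]

end fix

theorem stmt_9 (a : I → I → ℤ)
    (hdiag : ∀ i, a i i = 2) (hsym : ∀ i j, a i j = a j i)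
    (hoff : ∀ i j, i ≠ j → a i j ≤ 0) (i j : I) (hij : i ≠ j) (hzero : a i j = 0)
    (Ti Tj : Uq a ≃ₐ[Kv] Uq a) (hTi : TiCond a i Ti) (hTj : TiCond a j Tj) :
    Tj.trans Ti = Ti.trans Tj := by
  have hzji : a j i = 0 := (hsym j i).trans hzero
  have hcE : Commute (uE a i) (uE a j) := uE_comm a hij hzero
  have hcF : Commute (uF a i) (uF a j) := uF_comm a hij hzero
  have hTiEj : Ti (uE a j) = uE a j := TiCond_fix_E hTi hij.symm hzero
  have hTiFj : Ti (uF a j) = uF a j := TiCond_fix_F hTi hij.symm hzero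
  have hTjEi : Tj (uE a i) = uE a i := TiCond_fix_E hTj hij hzji
  have hTjFi : Tj (uF a i) = uF a i := TiCond_fix_F hTj hij hzji
  have hhom : (Tj.trans Ti).toAlgHom.comp (RingQuot.mkAlgHom Kv (URel a)) =
      (Ti.trans Tj).toAlgHom.comp (RingQuot.mkAlgHom Kv (URel a)) := by
    apply FreeAlgebra.hom_ext
    funext g
    simp only [Function.comp_apply, AlgHom.coe_comp, AlgEquiv.toAlgHom_eq_coe,
      AlgHom.coe_coe, AlgEquiv.trans_apply]
    cases g with
    | E k =>
      show Ti (Tj (uE a k)) = Tj (Ti (uE a k))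
      by_cases hk1 : k = i
      · subst hk1
        rw [hTjEi, hTi.1, map_neg, map_mul, hTjFi, TiCond_fix_K hTj hzji]
      by_cases hk2 : k = j
      · subst hk2
        rw [hTiEj, hTj.1, map_neg, map_mul, hTiFj, TiCond_fix_K hTi hzero]
      · have e1 : Tj (uE a k) = Ssum (uE a j) ((-a j k).toNat)
            (fun r => (-1 : Kv) ^ r * v ^ (-(r : ℤ)))
            (fun r => (-a j k).toNat - r) (fun r => r) (uE a k) := hTj.2.2.1 k hk2
        have e2 : Ti (uE a k) = Ssum (uE a i) ((-a i k).toNat)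
            (fun r => (-1 : Kv) ^ r * v ^ (-(r : ℤ)))
            (fun r => (-a i k).toNat - r) (fun r => r) (uE a k) := hTi.2.2.1 k hk1
        rw [e1, e2, map_Ssum Ti, map_Ssum Tj, hTiEj, hTjEi, e1, e2]
        exact Ssum_swap (fun p q => dpow_commute hcE.symm p q) _ _ _ _ _ _ _ _ _
    | F k =>
      show Ti (Tj (uF a k)) = Tj (Ti (uF a k))
      by_cases hk1 : k = i
      · subst hk1
        rw [hTjFi, hTi.2.1, map_neg, map_mul, TiCond_fix_negK hTj hzji, hTjEi]
      by_cases hk2 : k = j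
      · subst hk2
        rw [hTiFj, hTj.2.1, map_neg, map_mul, TiCond_fix_negK hTi hzero, hTiEj]
      · have e1 : Tj (uF a k) = Ssum (uF a j) ((-a j k).toNat)
            (fun r => (-1 : Kv) ^ r * v ^ r)
            (fun r => r) (fun r => (-a j k).toNat - r) (uF a k) := hTj.2.2.2.1 k hk2
        have e2 : Ti (uF a k) = Ssum (uF a i) ((-a i k).toNat)
            (fun r => (-1 : Kv) ^ r * v ^ r)
            (fun r => r) (fun r => (-a i k).toNat - r) (uF a k) := hTi.2.2.2.1 k hk1
        rw [e1, e2, map_Ssum Ti, map_Ssum Tj, hTiFj, hTjFi, e1, e2]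
        exact Ssum_swap (fun p q => dpow_commute hcF.symm p q) _ _ _ _ _ _ _ _ _
    | K mu =>
      show Ti (Tj (uK a mu)) = Tj (Ti (uK a mu))
      rw [hTj.2.2.2.2, hTi.2.2.2.2, hTi.2.2.2.2, hTj.2.2.2.2]
      have h1 : alphaMap a i (mu - alphaMap a j mu • hgen j) = alphaMap a i mu := by
        rw [alphaMap_sub, alphaMap_smul_single, hzero, mul_zero, sub_zero]
      have h2 : alphaMap a j (mu - alphaMap a i mu • hgen i) = alphaMap a j mu := by
        rw [alphaMap_sub, alphaMap_smul_single, hzji, mul_zero, sub_zero]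
      exact congrArg (uK a) (by rw [h1, h2, sub_right_comm])
  refine AlgEquiv.ext fun x => ?_
  obtain ⟨y, rfl⟩ := RingQuot.mkAlgHom_surjective Kv (URel a) x
  exact AlgHom.congr_fun hhom y
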